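/- In ℝ² with the standard basis covectors, for h ∈ {1,…,k} and a ∈ {1,…,ℓ}, the tensor λ of w = (⊗^{h-1}dx¹ ⊗_s ⊗^{k-h}dx²) ⊗ (⊗^{a-1}dx¹ ⊗_s ⊗^{ℓ-a}dx²) with respect to the Euclidean metric equals (⊗^{h}dx¹ ⊗_s ⊗^{k-h}dx²) ⊗ (⊗^{a}dx¹ ⊗_s ⊗^{ℓ-a}dx²) + (⊗^{h-1}dx¹ ⊗_s ⊗^{k-h+1}dx²) ⊗ (⊗^{a-1}dx¹ ⊗_s ⊗^{ℓ-a+1}dx²). -/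

import Mathlib

open scoped BigOperators
open MeasureTheory

namespace MRT

/-- A multi-index with `n` slots, each ranging over the two coordinate indices of `ℝ²`
(`0` stands for the index "1", `1` stands for the index "2"). -/
abbrev Idx (n : ℕ) := Fin n → Fin 2

/-- A `(k,ℓ)`-tensor over `ℝ²`: a function of `k` first-group and `ℓ` second-group indices. -/
abbrev Tens (k l : ℕ) := Idx k → Idx l → ℝ

/-- A tensor with `n` (fully interchangeable) slots. -/
abbrev Full (n : ℕ) := Idx n → ℝ

/-- The index swap `δ` exchanging the two coordinate indices. -/
def dswap : Fin 2 → Fin 2 := fun i => 1 - i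

/-- `N J` : the number of entries of `J` equal to the first index ("1"). -/
def NJ {n : ℕ} (J : Idx n) : ℕ := (Finset.univ.filter fun j => J j = 0).card

/-- The operator `A`: `(Af)(I,J) = (-1)^(ℓ - N(J)) f(I, δ(J))`. -/
def opA {k l : ℕ} (f : Tens k l) : Tens k l :=
  fun I J => (-1 : ℝ) ^ (l - NJ J) * f I (dswap ∘ J)

/-- Full symmetrization (average over all permutations of the `n` slots). -/
noncomputable def Sym {n : ℕ} (h : Full n) : Full n :=
  fun I => ((Nat.factorial n : ℝ))⁻¹ * ∑ σ : Equiv.Perm (Fin n), h (I ∘ σ)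

/-- Symmetrization over the first index group only. -/
noncomputable def symK {k l : ℕ} (f : Tens k l) : Tens k l :=
  fun I J => ((Nat.factorial k : ℝ))⁻¹ * ∑ σ : Equiv.Perm (Fin k), f (I ∘ σ) J

/-- Symmetrization over the second index group only. -/
noncomputable def symL {k l : ℕ} (f : Tens k l) : Tens k l :=
  fun I J => ((Nat.factorial l : ℝ))⁻¹ * ∑ σ : Equiv.Perm (Fin l), f I (J ∘ σ)

/-- View a `(k,ℓ)`-tensor as a `(k+ℓ)`-tensor. -/
def toFull {k l : ℕ} (f : Tens k l) : Full (k + l) :=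
  fun I => f (fun i => I (Fin.castAdd l i)) (fun j => I (Fin.natAdd k j))

/-- View a `(k+ℓ)`-tensor as a `(k,ℓ)`-tensor. -/
def fromFull {k l : ℕ} (h : Full (k + l)) : Tens k l :=
  fun I J => h (Fin.append I J)

/-- The operator `λ` : symmetrized multiplication with the Euclidean metric `g = δ`. -/
noncomputable def lam {k l : ℕ} (w : Tens k l) : Tens (k + 1) (l + 1) :=
  symK (symL (fun I J =>
    (if I 0 = J 0 then (1 : ℝ) else 0) * w (Fin.tail I) (Fin.tail J)))

/-- The contraction `v^I = v_{i₁} ⋯ v_{i_n}`. -/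
def vpow {n : ℕ} (v : Fin 2 → ℝ) (I : Idx n) : ℝ := ∏ i, v (I i)

/-- The rotation `σ(v) = (v₂, -v₁)`. -/
def rot (v : Fin 2 → ℝ) : Fin 2 → ℝ := ![v 1, -v 0]

/-- Euclidean dot product on `ℝ²`. -/
def dot (x v : Fin 2 → ℝ) : ℝ := x 0 * v 0 + x 1 * v 1

/-- Symmetry in the first `k` and in the last `ℓ` index slots. -/
def SymmIn {k l : ℕ} (f : Tens k l) : Prop :=
  ∀ (I : Idx k) (J : Idx l) (σ : Equiv.Perm (Fin k)) (τ : Equiv.Perm (Fin l)),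
    f (I ∘ σ) (J ∘ τ) = f I J

/-- Smoothness of a tensor field on `ℝ²`, componentwise. -/
def SmoothT {k l : ℕ} (u : (Fin 2 → ℝ) → Tens k l) : Prop :=
  ∀ I J, ContDiff ℝ (⊤ : ℕ∞) fun x => u x I J

/-- The operator `d'` for the flat connection: symmetrized partial derivative placed in the
first index group. -/
noncomputable def dprime {k l : ℕ} (u : (Fin 2 → ℝ) → Tens k l) :
    (Fin 2 → ℝ) → Tens (k + 1) l :=
  fun x => symK fun I J =>
    fderiv ℝ (fun y => u y (Fin.tail I) J) x (Pi.single (I 0) 1)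

/-- The full (flat) covariant derivative of a field of `n`-tensors, derivative slot first. -/
noncomputable def dfull {n : ℕ} (h : (Fin 2 → ℝ) → Full n) :
    (Fin 2 → ℝ) → Full (n + 1) :=
  fun x I => fderiv ℝ (fun y => h y (Fin.tail I)) x (Pi.single (I 0) 1)

/-- The inner derivative `dˢ`: full symmetrization of the derivative, viewed as a
`(k+1,ℓ)`-tensor field. -/
noncomputable def dsym {k l : ℕ} (u : (Fin 2 → ℝ) → Tens k l) :
    (Fin 2 → ℝ) → Tens (k + 1) l :=
  fun x I J =>
    Sym (dfull (fun y => toFull (u y)) x) (Fin.cons (I 0) (Fin.append (Fin.tail I) J))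

/-- The symmetric tensor `(⊗^m dx¹) ⊗_s (⊗^(n-m) dx²)` (averaged symmetrization of the
elementary tensor product with `m` copies of `dx¹` followed by copies of `dx²`). -/
noncomputable def E (n m : ℕ) : Full n :=
  Sym fun I => if ∀ i : Fin n, (I i = 0 ↔ (i : ℕ) < m) then 1 else 0

/-- Membership in the closed unit disc. -/
def inDisc (x : Fin 2 → ℝ) : Prop := x 0 ^ 2 + x 1 ^ 2 ≤ 1

/-- Membership in the unit circle (the boundary of the disc). -/
def onSphere (x : Fin 2 → ℝ) : Prop := x 0 ^ 2 + x 1 ^ 2 = 1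

/-- Unit vectors of `ℝ²`. -/
def unitVec (v : Fin 2 → ℝ) : Prop := v 0 ^ 2 + v 1 ^ 2 = 1

/-- Exit time of the chord `t ↦ x + t v` of the unit disc, `x ∈ ∂D`, `‖v‖ = 1`. -/
noncomputable def tauD (x v : Fin 2 → ℝ) : ℝ := -2 * dot x v

/-- The mixed ray transform `L_{k,ℓ}` on the Euclidean unit disc. -/
noncomputable def Lray {k l : ℕ} (f : (Fin 2 → ℝ) → Tens k l) (x v : Fin 2 → ℝ) : ℝ :=
  ∫ t in (0:ℝ)..tauD x v,
    ∑ I : Idx k, ∑ J : Idx l, f (x + t • v) I J * vpow v I * vpow (rot v) J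

/-- The geodesic (X-ray) transform of a field of symmetric `n`-tensors on the unit disc. -/
noncomputable def Iray {n : ℕ} (h : (Fin 2 → ℝ) → Full n) (x v : Fin 2 → ℝ) : ℝ :=
  ∫ t in (0:ℝ)..tauD x v, ∑ I : Idx n, h (x + t • v) I * vpow v I


lemma NJ_eq_sum {n : ℕ} (I : Idx n) :
    NJ I = ∑ i, if I i = 0 then 1 else 0 := Finset.card_filter _ _

lemma NJ_comp_perm {n : ℕ} (I : Idx n) (σ : Equiv.Perm (Fin n)) :
    NJ (I ∘ σ) = NJ I := by
  rw [NJ_eq_sum, NJ_eq_sum]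
  exact Equiv.sum_comp σ (fun i => if I i = 0 then 1 else 0)

lemma NJ_succ {n : ℕ} (G : Idx (n + 1)) :
    NJ G = (if G 0 = 0 then 1 else 0) + NJ (Fin.tail G) := by
  rw [NJ_eq_sum, NJ_eq_sum, Fin.sum_univ_succ]
  rfl

lemma tail_cond {n m : ℕ} (G : Idx (n + 1)) :
    (NJ (Fin.tail G) = m) ↔ NJ G = m + (if G 0 = 0 then 1 else 0) := by
  rw [NJ_succ G]; by_cases h : G 0 = 0 <;> simp [h] <;> omega

lemma NJ_le {n : ℕ} (I : Idx n) : NJ I ≤ n := by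
  simpa [NJ] using Finset.card_filter_le Finset.univ (fun j => I j = 0)

lemma sum_perm_head {n : ℕ} (g : Fin (n + 1) → ℝ) :
    ∑ σ : Equiv.Perm (Fin (n + 1)), g (σ 0) = n.factorial * ∑ j, g j := by
  rw [← Equiv.sum_comp Equiv.Perm.decomposeFin.symm (fun σ => g (σ 0))]
  simp only [Fintype.sum_prod_type, Equiv.Perm.decomposeFin_symm_apply_zero,
    Finset.sum_const, Finset.card_univ, Fintype.card_perm, Fintype.card_fin,
    nsmul_eq_mul, Finset.mul_sum]

lemma sum_indexfun {n : ℕ} (I : Idx n) (g : Fin 2 → ℝ) :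
    ∑ i, g (I i) = (NJ I : ℝ) * g 0 + ((n : ℝ) - NJ I) * g 1 := by
  rw [← Finset.sum_filter_add_sum_filter_not Finset.univ (fun i => I i = 0)]
  have h1 : ∑ i ∈ Finset.univ.filter (fun i => I i = 0), g (I i)
      = (NJ I : ℝ) * g 0 := by
    rw [Finset.sum_congr rfl (fun i hi => by
      rw [(Finset.mem_filter.1 hi).2])]
    simp [NJ, mul_comm]
  have h2 : ∑ i ∈ Finset.univ.filter (fun i => ¬ I i = 0), g (I i)
      = ((n : ℝ) - NJ I) * g 1 := by
    rw [Finset.sum_congr rfl (fun i hi => by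
      rw [Fin.eq_one_of_ne_zero _ (Finset.mem_filter.1 hi).2])]
    rw [Finset.sum_const, Finset.filter_not, Finset.card_sdiff_of_subset (Finset.filter_subset _ _)]
    have := NJ_le I
    simp only [Finset.card_univ, Fintype.card_fin, nsmul_eq_mul]
    rw [Nat.cast_sub (by simpa [NJ] using this)]
    rfl
  rw [h1, h2]

def permSplit {n : ℕ} (p q : Fin n → Prop) [DecidablePred p] [DecidablePred q] :
    {σ : Equiv.Perm (Fin n) // ∀ i, q (σ i) ↔ p i} ≃
      (({i // p i} ≃ {i // q i}) × ({i // ¬ p i} ≃ {i // ¬ q i})) where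
  toFun σ := (σ.1.subtypeEquiv (fun i => (σ.2 i).symm),
              σ.1.subtypeEquiv (fun i => not_congr (σ.2 i).symm))
  invFun e := ⟨(Equiv.sumCompl p).symm.trans ((e.1.sumCongr e.2).trans (Equiv.sumCompl q)), by
    intro i
    by_cases hi : p i
    · simp [Equiv.sumCompl_symm_apply_of_pos hi, hi, Subtype.prop]
    · simpa [Equiv.sumCompl_symm_apply_of_neg hi, hi] using (e.2 ⟨i, hi⟩).2⟩
  left_inv := by
    rintro ⟨σ, hσ⟩
    ext i
    by_cases hi : p i
    · simp [Equiv.sumCompl_symm_apply_of_pos hi]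
    · simp [Equiv.sumCompl_symm_apply_of_neg hi]
  right_inv := by
    rintro ⟨e₁, e₂⟩
    simp only [Prod.mk.injEq]
    constructor
    · ext i
      simp [Equiv.sumCompl_symm_apply_of_pos i.2]
    · ext i
      simp [Equiv.sumCompl_symm_apply_of_neg i.2]

lemma card_perm_filter {n m : ℕ} (hm : m ≤ n) (I : Idx n) :
    Fintype.card {σ : Equiv.Perm (Fin n) // ∀ i, I (σ i) = 0 ↔ (i : ℕ) < m}
      = if NJ I = m then m.factorial * (n - m).factorial else 0 := by
  rw [Fintype.card_congr (permSplit (fun i : Fin n => (i : ℕ) < m) (fun i => I i = 0))]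
  have cp : Fintype.card {i : Fin n // (i : ℕ) < m} = m := by
    refine Fintype.card_congr ⟨fun i => ⟨i.1, i.2⟩, fun j => ⟨⟨j.1, lt_of_lt_of_le j.2 hm⟩, j.2⟩,
      fun i => rfl, fun j => rfl⟩ |>.trans (Fintype.card_fin m)
  have cq : Fintype.card {i : Fin n // I i = 0} = NJ I := by
    simp [Fintype.card_subtype, NJ]
  have cpc : Fintype.card {i : Fin n // ¬ (i : ℕ) < m} = n - m := by
    rw [Fintype.card_subtype_compl, cp, Fintype.card_fin]
  have cqc : Fintype.card {i : Fin n // ¬ I i = 0} = n - NJ I := by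
    rw [Fintype.card_subtype_compl, cq, Fintype.card_fin]
  by_cases hNJ : NJ I = m
  · rw [if_pos hNJ, Fintype.card_prod,
      Fintype.card_equiv (Fintype.equivOfCardEq (by rw [cp, cq, hNJ])),
      Fintype.card_equiv (Fintype.equivOfCardEq (by rw [cpc, cqc, hNJ])), cp, cpc]
  · rw [if_neg hNJ, Fintype.card_prod]
    have : IsEmpty ({i : Fin n // (i : ℕ) < m} ≃ {i : Fin n // I i = 0}) := by
      refine ⟨fun e => hNJ ?_⟩
      rw [← cq, ← Fintype.card_congr e, cp]
    rw [Fintype.card_eq_zero, zero_mul]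

lemma E_eval {n m : ℕ} (hm : m ≤ n) (I : Idx n) :
    E n m I = if NJ I = m
      then (m.factorial * (n - m).factorial : ℝ) / n.factorial else 0 := by
  unfold E Sym
  have h1 : (∑ σ : Equiv.Perm (Fin n),
        if ∀ i : Fin n, ((I ∘ σ) i = 0 ↔ (i : ℕ) < m) then (1 : ℝ) else 0)
      = ((Finset.univ.filter fun σ : Equiv.Perm (Fin n) =>
          ∀ i, I (σ i) = 0 ↔ (i : ℕ) < m).card : ℝ) := by
    rw [Finset.sum_boole]
    rfl
  rw [h1, ← Fintype.card_subtype, card_perm_filter hm]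
  split <;> simp [div_eq_inv_mul]

set_option maxHeartbeats 2000000 in
/-- for `1 ≤ h ≤ k`, `1 ≤ a ≤ ℓ`, the operator `λ` applied to
`w = (⊗^(h-1)dx¹ ⊗_s ⊗^(k-h)dx²) ⊗ (⊗^(a-1)dx¹ ⊗_s ⊗^(ℓ-a)dx²)` (Euclidean metric) gives
`(⊗^h dx¹ ⊗_s ⊗^(k-h)dx²) ⊗ (⊗^a dx¹ ⊗_s ⊗^(ℓ-a)dx²)
  + (⊗^(h-1)dx¹ ⊗_s ⊗^(k-h+1)dx²) ⊗ (⊗^(a-1)dx¹ ⊗_s ⊗^(ℓ-a+1)dx²)`. -/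
theorem lam_on_basis (k l h a : ℕ) (hh1 : 1 ≤ h) (hhk : h ≤ k + 1)
    (ha1 : 1 ≤ a) (hal : a ≤ l + 1)
    (w : Tens k l) (hw : ∀ I J, w I J = E k (h - 1) I * E l (a - 1) J) :
    ∀ I J, lam w I J
        = E (k + 1) h I * E (l + 1) a J + E (k + 1) (h - 1) I * E (l + 1) (a - 1) J := by
  obtain ⟨h', rfl⟩ : ∃ h', h = h' + 1 := ⟨h - 1, by omega⟩
  obtain ⟨a', rfl⟩ : ∃ a', a = a' + 1 := ⟨a - 1, by omega⟩
  obtain ⟨b, rfl⟩ : ∃ b, k = h' + b := ⟨k - h', by omega⟩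
  obtain ⟨c, rfl⟩ : ∃ c, l = a' + c := ⟨l - a', by omega⟩
  intro I J
  set c1 : ℝ := (h'.factorial * b.factorial : ℝ) / (h' + b).factorial with hc1
  set c2 : ℝ := (a'.factorial * c.factorial : ℝ) / (a' + c).factorial with hc2
  have hw' : ∀ (A : Idx (h' + b)) (B : Idx (a' + c)),
      w A B = (if NJ A = h' then c1 else 0) * (if NJ B = a' then c2 else 0) := by
    intro A B
    rw [hw, E_eval (by omega) A, E_eval (by omega) B]
    have e1 : h' + 1 - 1 = h' := by omega
    have e2 : a' + 1 - 1 = a' := by omega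
    have e3 : h' + b - h' = b := by omega
    have e4 : a' + c - a' = a' + c - a' := rfl
    have e5 : a' + c - a' = c := by omega
    rw [e1, e2, e3, e5]
  set F : Fin 2 → Fin 2 → ℝ := fun x y =>
    (if x = y then (1 : ℝ) else 0) *
      ((if NJ I = h' + (if x = 0 then 1 else 0) then c1 else 0) *
       (if NJ J = a' + (if y = 0 then 1 else 0) then c2 else 0)) with hF
  have step1 : lam w I J
      = (((h' + b + 1).factorial : ℝ))⁻¹ *
          ∑ σ : Equiv.Perm (Fin (h' + b + 1)),
            ((((a' + c + 1).factorial : ℝ))⁻¹ *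
              ∑ τ : Equiv.Perm (Fin (a' + c + 1)), F (I (σ 0)) (J (τ 0))) := by
    unfold lam symK symL
    congr 1
    refine Finset.sum_congr rfl fun σ _ => ?_
    congr 1
    refine Finset.sum_congr rfl fun τ _ => ?_
    simp only [hw', tail_cond, NJ_comp_perm, hF, Function.comp_apply]
  have hG : ∀ x : Fin 2, (∑ j, F x (J j))
      = (NJ J : ℝ) * F x 0 + (((a' + c + 1 : ℕ) : ℝ) - NJ J) * F x 1 :=
    fun x => sum_indexfun J (F x)
  have e2 : ∀ x : Fin 2,
      ∑ τ : Equiv.Perm (Fin (a' + c + 1)), F x (J (τ 0))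
        = (a' + c).factorial * ∑ j, F x (J j) :=
    fun x => sum_perm_head (fun y => F x (J y))
  have main : lam w I J
      = (((h' + b + 1).factorial : ℝ))⁻¹ * (((a' + c + 1).factorial : ℝ))⁻¹ *
          (a' + c).factorial * (h' + b).factorial *
          ((NJ I : ℝ) * ((NJ J : ℝ) * F 0 0 + (((a' + c + 1 : ℕ) : ℝ) - NJ J) * F 0 1)
            + (((h' + b + 1 : ℕ) : ℝ) - NJ I) *
                ((NJ J : ℝ) * F 1 0 + (((a' + c + 1 : ℕ) : ℝ) - NJ J) * F 1 1)) := by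
    rw [step1]
    simp only [e2]
    have pull : ∑ σ : Equiv.Perm (Fin (h' + b + 1)),
        (((a' + c + 1).factorial : ℝ))⁻¹ *
          (((a' + c).factorial : ℝ) * ∑ j, F (I (σ 0)) (J j))
        = (((a' + c + 1).factorial : ℝ))⁻¹ * (((a' + c).factorial : ℝ) *
            (((h' + b).factorial : ℝ) * ∑ i, (fun x => ∑ j, F x (J j)) (I i))) := by
      rw [← Finset.mul_sum, ← Finset.mul_sum,
        sum_perm_head (fun i => ∑ j, F (I i) (J j))]
    rw [pull, sum_indexfun I (fun x => ∑ j, F x (J j))]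
    simp only [hG]
    push_cast
    ring
  have F00 : F 0 0 = (if NJ I = h' + 1 then c1 else 0) * (if NJ J = a' + 1 then c2 else 0) := by
    simp [hF]
  have F11 : F 1 1 = (if NJ I = h' then c1 else 0) * (if NJ J = a' then c2 else 0) := by
    simp [hF]
  have F01 : F 0 1 = 0 := by simp [hF]
  have F10 : F 1 0 = 0 := by simp [hF]
  have E1 : E (h' + b + 1) (h' + 1) I
      = if NJ I = h' + 1 then ((h' + 1).factorial * b.factorial : ℝ) / (h' + b + 1).factorial
        else 0 := by
    rw [E_eval (by omega) I]
    have : h' + b + 1 - (h' + 1) = b := by omega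
    rw [this]
  have E2 : E (a' + c + 1) (a' + 1) J
      = if NJ J = a' + 1 then ((a' + 1).factorial * c.factorial : ℝ) / (a' + c + 1).factorial
        else 0 := by
    rw [E_eval (by omega) J]
    have : a' + c + 1 - (a' + 1) = c := by omega
    rw [this]
  have E1' : E (h' + b + 1) (h' + 1 - 1) I
      = if NJ I = h' then (h'.factorial * (b + 1).factorial : ℝ) / (h' + b + 1).factorial
        else 0 := by
    have e : h' + 1 - 1 = h' := by omega
    rw [e, E_eval (by omega) I]
    have : h' + b + 1 - h' = b + 1 := by omega
    rw [this]
  have E2' : E (a' + c + 1) (a' + 1 - 1) J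
      = if NJ J = a' then (a'.factorial * (c + 1).factorial : ℝ) / (a' + c + 1).factorial
        else 0 := by
    have e : a' + 1 - 1 = a' := by omega
    rw [e, E_eval (by omega) J]
    have : a' + c + 1 - a' = c + 1 := by omega
    rw [this]
  rw [main, E1, E2, E1', E2', F00, F11, F01, F10]
  have fk : ((h' + b).factorial : ℝ) ≠ 0 := by
    exact_mod_cast (h' + b).factorial_ne_zero
  have fl : ((a' + c).factorial : ℝ) ≠ 0 := by
    exact_mod_cast (a' + c).factorial_ne_zero
  have fk1 : (((h' + b + 1).factorial : ℕ) : ℝ) ≠ 0 := by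
    exact_mod_cast (h' + b + 1).factorial_ne_zero
  have fl1 : (((a' + c + 1).factorial : ℕ) : ℝ) ≠ 0 := by
    exact_mod_cast (a' + c + 1).factorial_ne_zero
  have ne1 : ¬(h' + 1 = h') := by omega
  have ne2 : ¬(h' = h' + 1) := by omega
  have ne3 : ¬(a' + 1 = a') := by omega
  have ne4 : ¬(a' = a' + 1) := by omega
  have fb : ((h' : ℝ) + b + 1) ≠ 0 := by positivity
  have fc : ((a' : ℝ) + c + 1) ≠ 0 := by positivity
  by_cases p1 : NJ I = h' + 1 <;> by_cases p0 : NJ I = h' <;>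
    by_cases q1 : NJ J = a' + 1 <;> by_cases q0 : NJ J = a' <;>
    first
      | (exfalso; omega)
      | (simp only [p1, p0, q1, q0, ne1, ne2, ne3, ne4, if_true, if_false,
          eq_self_iff_true, ite_true, ite_false, mul_zero, zero_mul, add_zero,
          zero_add, mul_one, one_mul] <;>
         first
           | ring1
           | (simp only [hc1, hc2, Nat.factorial_succ] <;>
              push_cast <;>
              field_simp <;>
              ring1))

end MRT
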